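/- Let f : Γ → Γ' be a fold of graphs identifying closed edges e_1 and e_2 with common initial vertex. Then f is a homotopy equivalence if and only if the terminal vertices of e_1 and e_2 are distinct (i.e. the fold is of type 1). A type-2 fold (equal terminal vertices) fails to be injective on fundamental groups. -/

import Mathlib

/-- A (Serre) graph: a vertex set, a set of darts (oriented edges), a
fixed-point-free involution reversing darts, and an initial-vertex map. -/
structure SerreGraph where
  V : Type
  E : Type
  bar : E → E
  bar_bar : ∀ e, bar (bar e) = e
  bar_ne : ∀ e, bar e ≠ e
  src : E → V

/-- Terminal vertex of a dart. -/
def SerreGraph.tgt (G : SerreGraph) (e : G.E) : G.V := G.src (G.bar e)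

/-- Local finiteness of a graph. -/
def SerreGraph.LocFin (G : SerreGraph) : Prop := ∀ v : G.V, {e : G.E | G.src e = v}.Finite

/-- A combinatorial graph morphism (darts to darts). -/
structure GraphHom (G H : SerreGraph) where
  onV : G.V → H.V
  onE : G.E → H.E
  map_bar : ∀ e, onE (G.bar e) = H.bar (onE e)
  map_src : ∀ e, onV (G.src e) = H.src (onE e)

theorem GraphHom.map_tgt {G H : SerreGraph} (f : GraphHom G H) (e : G.E) :
    f.onV (G.tgt e) = H.tgt (f.onE e) := by
  unfold SerreGraph.tgt; rw [f.map_src, f.map_bar]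

/-- Composition of graph morphisms. -/
def GraphHom.comp {G H K : SerreGraph} (g : GraphHom H K) (f : GraphHom G H) :
    GraphHom G K where
  onV := g.onV ∘ f.onV
  onE := g.onE ∘ f.onE
  map_bar e := by simp [Function.comp, f.map_bar, g.map_bar]
  map_src e := by simp [Function.comp, f.map_src, g.map_src]

/-- Identity graph morphism. -/
def GraphHom.id (G : SerreGraph) : GraphHom G G :=
  ⟨fun v => v, fun e => e, fun _ => rfl, fun _ => rfl⟩

/-- Edge walks in a graph, with explicit endpoint bookkeeping. -/
inductive EWalk (G : SerreGraph) : G.V → G.V → Type where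
  | nil (v : G.V) : EWalk G v v
  | cons {u v w : G.V} (e : G.E) (hs : G.src e = u) (ht : G.tgt e = v)
      (p : EWalk G v w) : EWalk G u w

/-- A graph is connected if any two vertices are joined by an edge walk. -/
def SerreGraph.Conn (G : SerreGraph) : Prop := ∀ u v : G.V, Nonempty (EWalk G u v)

/-- Homotopy (rel endpoints) of edge walks: the equivalence relation generated
by cancelling backtracks `e · ē`. -/
inductive Htp (G : SerreGraph) : ∀ {u v : G.V}, EWalk G u v → EWalk G u v → Prop where
  | refl {u v} (p : EWalk G u v) : Htp G p p
  | symm {u v} {p q : EWalk G u v} : Htp G p q → Htp G q p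
  | trans {u v} {p q r : EWalk G u v} : Htp G p q → Htp G q r → Htp G p r
  | cons {u v w} (e : G.E) (hs : G.src e = u) (ht : G.tgt e = v)
      {p q : EWalk G v w} : Htp G p q →
      Htp G (EWalk.cons e hs ht p) (EWalk.cons e hs ht q)
  | cancel {u v w} (e : G.E) (hs : G.src e = u) (ht : G.tgt e = v)
      (hs' : G.src (G.bar e) = v) (ht' : G.tgt (G.bar e) = u)
      (p : EWalk G u w) :
      Htp G (EWalk.cons e hs ht (EWalk.cons (G.bar e) hs' ht' p)) p

/-- The image of an edge walk under a graph morphism. -/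
def GraphHom.mapWalk {G H : SerreGraph} (f : GraphHom G H) :
    ∀ {u v : G.V}, EWalk G u v → EWalk H (f.onV u) (f.onV v)
  | _, _, .nil v => .nil (f.onV v)
  | _, _, .cons e hs ht p =>
      .cons (f.onE e) (by rw [← f.map_src, hs]) (by rw [← f.map_tgt, ht])
        (f.mapWalk p)

/-- `f` induces a bijection on fundamental groups at `v₀` (surjectivity and
injectivity on homotopy classes of loops); for connected graphs this is
equivalent to `f` being a homotopy equivalence. -/
def InducesPi1Bij {G H : SerreGraph} (f : GraphHom G H) (v₀ : G.V) : Prop :=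
  (∀ q : EWalk H (f.onV v₀) (f.onV v₀),
      ∃ p : EWalk G v₀ v₀, Htp H (f.mapWalk p) q) ∧
  (∀ p p' : EWalk G v₀ v₀, Htp H (f.mapWalk p) (f.mapWalk p') → Htp G p p')

/-- Immersions: locally injective combinatorial graph maps. -/
def IsImmersion {G H : SerreGraph} (f : GraphHom G H) : Prop :=
  ∀ a b : G.E, G.src a = G.src b → f.onE a = f.onE b → a = b

/-- Isomorphisms of graphs. -/
def IsGraphIso {G H : SerreGraph} (f : GraphHom G H) : Prop :=
  Function.Bijective f.onV ∧ Function.Bijective f.onE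

/-- `f` is the Stallings fold identifying the (closures of the) distinct darts
`e₁, e₂` with common initial vertex: it is surjective, identifies exactly the
orbits of `{e₁, e₂}` on darts and `{tgt e₁, tgt e₂}` on vertices, and nothing
else. -/
def IsFoldAt {G H : SerreGraph} (f : GraphHom G H) (e₁ e₂ : G.E) : Prop :=
  e₁ ≠ e₂ ∧ e₂ ≠ G.bar e₁ ∧ G.src e₁ = G.src e₂ ∧
  Function.Surjective f.onV ∧ Function.Surjective f.onE ∧
  f.onE e₁ = f.onE e₂ ∧
  (∀ a b : G.E, f.onE a = f.onE b →
    a = b ∨ ({a, b} : Set G.E) = {e₁, e₂} ∨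
      ({a, b} : Set G.E) = {G.bar e₁, G.bar e₂}) ∧
  (∀ u v : G.V, f.onV u = f.onV v →
    u = v ∨ ({u, v} : Set G.V) = {G.tgt e₁, G.tgt e₂})

/-- A Stallings fold. -/
def IsFold {G H : SerreGraph} (f : GraphHom G H) : Prop := ∃ e₁ e₂, IsFoldAt f e₁ e₂

/-- A type-1 Stallings fold: the folded edges have distinct terminal vertices. -/
def IsFold1 {G H : SerreGraph} (f : GraphHom G H) : Prop :=
  ∃ e₁ e₂, IsFoldAt f e₁ e₂ ∧ G.tgt e₁ ≠ G.tgt e₂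

/-- The composite `fs (n-1) ∘ ⋯ ∘ fs 0` of a chain of graph morphisms. -/
def chainComp (Gs : ℕ → SerreGraph) (fs : ∀ i : ℕ, GraphHom (Gs i) (Gs (i + 1))) :
    ∀ n : ℕ, GraphHom (Gs 0) (Gs n)
  | 0 => GraphHom.id (Gs 0)
  | n + 1 => (fs n).comp (chainComp Gs fs n)

/-!
A fold is inverted up to homotopy by lifting: send each edge of `H` to a chosen preimage and join
consecutive preimages by a *bridge*, a walk between two vertices with the same image. Distinct
such vertices are `tgt e₁` and `tgt e₂`, bridged by `ē₁ e₂` (or `ē₂ e₁`), which `f` collapses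
to a backtrack; so `f` maps the lift of `q` to a walk homotopic to `q`. When `tgt e₁ ≠ tgt e₂`,
bridges compose up to homotopy and slide across edges (`bridge · a' ≃ a · bridge` whenever
`f a = f a'`), so lifting respects homotopy and also inverts `f` from the other side.

When `tgt e₁ = tgt e₂`, the loop `e₁ ē₂` maps to a backtrack, but it crosses `e₁` once, and the
signed number of crossings of a fixed dart is a homotopy invariant.
-/

namespace SerreGraph

variable (G : SerreGraph)

theorem bar_involutive : Function.Involutive G.bar := G.bar_bar

theorem tgt_bar (e : G.E) : G.tgt (G.bar e) = G.src e := by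
  rw [tgt, bar_bar]

open Classical in
noncomputable def crossing (d e : G.E) : ℤ :=
  if e = d then 1 else if e = G.bar d then -1 else 0

theorem crossing_self (d : G.E) : G.crossing d d = 1 := if_pos rfl

theorem crossing_bar (d e : G.E) : G.crossing d (G.bar e) = -G.crossing d e := by
  rcases eq_or_ne e d with rfl | hd
  · simp [crossing, G.bar_ne]
  rcases eq_or_ne e (G.bar d) with rfl | hb
  · simp [crossing, G.bar_bar, hd]
  have h₁ : G.bar e ≠ d := fun h => hb (h ▸ (G.bar_bar e).symm)
  have h₂ : G.bar e ≠ G.bar d := fun h => hd (G.bar_involutive.injective h)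
  simp [crossing, hd, hb, h₁, h₂]

end SerreGraph

namespace EWalk

variable {G : SerreGraph}

def append : ∀ {u v w : G.V}, EWalk G u v → EWalk G v w → EWalk G u w
  | _, _, _, nil _, q => q
  | _, _, _, cons e hs ht p, q => cons e hs ht (p.append q)

@[simp] theorem append_nil : ∀ {u v : G.V} (p : EWalk G u v), p.append (nil v) = p
  | _, _, nil _ => rfl
  | _, _, cons e hs ht p => by rw [append, append_nil]

theorem append_assoc : ∀ {u v w z : G.V} (p : EWalk G u v) (q : EWalk G v w)
    (r : EWalk G w z), (p.append q).append r = p.append (q.append r)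
  | _, _, _, _, nil _, _, _ => rfl
  | _, _, _, _, cons e hs ht p, q, r => by rw [append, append, append, append_assoc]

def copy {u v u' v' : G.V} (p : EWalk G u v) (hu : u = u') (hv : v = v') : EWalk G u' v' :=
  hu ▸ hv ▸ p

theorem copy_nil_append {v v' w : G.V} (hv : v = v') (p : EWalk G v w) :
    ((nil v).copy hv rfl).append p = p.copy hv rfl := by
  subst hv; rfl

theorem cons_copy {u v v' w : G.V} (e : G.E) (hs : G.src e = u) (ht : G.tgt e = v')
    (p : EWalk G v w) (hv : v = v') :
    cons e hs ht (p.copy hv rfl) = cons e hs (ht.trans hv.symm) p := by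
  subst hv; rfl

theorem copy_cons {u u' v w : G.V} (e : G.E) (hs : G.src e = u) (ht : G.tgt e = v)
    (p : EWalk G v w) (hu : u = u') :
    (cons e hs ht p).copy hu rfl = cons e (hs.trans hu) ht p := by
  subst hu; rfl

/-- The walk `ā b`. Its middle vertex `m` is a parameter, so that such walks glue and cancel
without casts. -/
def vee (a b : G.E) {m : G.V} (ha : G.tgt (G.bar a) = m) (hb : G.src b = m) :
    EWalk G (G.tgt a) (G.tgt b) :=
  cons (G.bar a) rfl ha (cons b hb rfl (nil _))

noncomputable def winding (d : G.E) : ∀ {u v : G.V}, EWalk G u v → ℤ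
  | _, _, nil _ => 0
  | _, _, cons e _ _ p => G.crossing d e + p.winding d

theorem winding_append (d : G.E) : ∀ {u v w : G.V} (p : EWalk G u v) (q : EWalk G v w),
    (p.append q).winding d = p.winding d + q.winding d
  | _, _, _, nil _, q => by simp [append, winding]
  | _, _, _, cons e hs ht p, q => by
      rw [append, winding, winding, winding_append d p q, add_assoc]

end EWalk

namespace Htp

variable {G : SerreGraph}

theorem of_eq {u v : G.V} {p q : EWalk G u v} (h : p = q) : Htp G p q := h ▸ .refl p

theorem append_right {u v w : G.V} {p q : EWalk G u v} (h : Htp G p q)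
    (r : EWalk G v w) : Htp G (p.append r) (q.append r) := by
  induction h with
  | refl p => exact .refl _
  | symm _ ih => exact .symm (ih r)
  | trans _ _ ih₁ ih₂ => exact .trans (ih₁ r) (ih₂ r)
  | cons e hs ht _ ih => exact .cons e hs ht (ih r)
  | cancel e hs ht hs' ht' p => exact .cancel e hs ht hs' ht' (p.append r)

theorem append_left : ∀ {u v w : G.V} (p : EWalk G u v) {q r : EWalk G v w},
    Htp G q r → Htp G (p.append q) (p.append r)
  | _, _, _, .nil _, _, _, h => h
  | _, _, _, .cons e hs ht p, _, _, h => .cons e hs ht (append_left p h)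

theorem append {u v w : G.V} {p p' : EWalk G u v} {q q' : EWalk G v w}
    (hp : Htp G p p') (hq : Htp G q q') : Htp G (p.append q) (p'.append q') :=
  (hp.append_right q).trans (append_left p' hq)

theorem cons_cons_of_eq_bar {u v u' w : G.V} {e e' : G.E} (he : e' = G.bar e)
    (hs : G.src e = u) (ht : G.tgt e = v) (hs' : G.src e' = v) (ht' : G.tgt e' = u')
    (p : EWalk G u' w) :
    Htp G (.cons e hs ht (.cons e' hs' ht' p))
      (p.copy (by rw [← ht', he, G.tgt_bar, hs]) rfl) := by
  subst he
  obtain rfl : u' = u := by rw [← ht', G.tgt_bar, hs]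
  exact .cancel e hs ht hs' ht' p

theorem vee_append_vee {a b : G.E} {m : G.V} (ha : G.tgt (G.bar a) = m) (hb : G.src b = m)
    (hb' : G.tgt (G.bar b) = m) (ha' : G.src a = m) :
    Htp G ((EWalk.vee a b ha hb).append (EWalk.vee b a hb' ha')) (.nil _) :=
  .trans (.cons _ _ _ (.cancel b hb rfl rfl hb' _))
    (cons_cons_of_eq_bar (G.bar_bar a).symm rfl ha ha' rfl _)

theorem winding_eq {u v : G.V} {p q : EWalk G u v} (h : Htp G p q) (d : G.E) :
    p.winding d = q.winding d := by
  induction h with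
  | refl p => rfl
  | symm _ ih => exact ih.symm
  | trans _ _ ih₁ ih₂ => exact ih₁.trans ih₂
  | cons e hs ht _ ih => simp only [EWalk.winding, ih]
  | cancel e hs ht hs' ht' p => simp only [EWalk.winding, G.crossing_bar]; ring

end Htp

namespace GraphHom

variable {G H : SerreGraph} (f : GraphHom G H)

theorem mapWalk_append : ∀ {u v w : G.V} (p : EWalk G u v) (q : EWalk G v w),
    f.mapWalk (p.append q) = (f.mapWalk p).append (f.mapWalk q)
  | _, _, _, .nil _, q => rfl
  | _, _, _, .cons e hs ht p, q => by
      rw [EWalk.append, mapWalk, mapWalk, EWalk.append, mapWalk_append]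

theorem mapWalk_vee_htp {a b : G.E} {m : G.V} (ha : G.tgt (G.bar a) = m) (hb : G.src b = m)
    (hab : f.onE a = f.onE b) :
    Htp H (f.mapWalk (EWalk.vee a b ha hb))
      ((EWalk.nil (f.onV (G.tgt b))).copy (by rw [f.map_tgt, f.map_tgt, hab]) rfl) :=
  Htp.cons_cons_of_eq_bar (by rw [f.map_bar, H.bar_bar, hab]) _ _ _ _ _

end GraphHom

namespace IsFoldAt

variable {G H : SerreGraph} {f : GraphHom G H} {e₁ e₂ : G.E}

theorem ne (hf : IsFoldAt f e₁ e₂) : e₁ ≠ e₂ := hf.1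

theorem ne_bar (hf : IsFoldAt f e₁ e₂) : e₂ ≠ G.bar e₁ := hf.2.1

theorem src_eq (hf : IsFoldAt f e₁ e₂) : G.src e₁ = G.src e₂ := hf.2.2.1

theorem surjective_onE (hf : IsFoldAt f e₁ e₂) : Function.Surjective f.onE := hf.2.2.2.2.1

theorem onE_eq (hf : IsFoldAt f e₁ e₂) : f.onE e₁ = f.onE e₂ := hf.2.2.2.2.2.1

theorem eq_or_of_onE_eq (hf : IsFoldAt f e₁ e₂) {a b : G.E} (h : f.onE a = f.onE b) :
    a = b ∨ (a = e₁ ∧ b = e₂ ∨ a = e₂ ∧ b = e₁) ∨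
      (a = G.bar e₁ ∧ b = G.bar e₂ ∨ a = G.bar e₂ ∧ b = G.bar e₁) := by
  simpa only [Set.pair_eq_pair_iff] using hf.2.2.2.2.2.2.1 a b h

theorem eq_or_of_onV_eq (hf : IsFoldAt f e₁ e₂) {u v : G.V} (h : f.onV u = f.onV v) :
    u = v ∨ (u = G.tgt e₁ ∧ v = G.tgt e₂ ∨ u = G.tgt e₂ ∧ v = G.tgt e₁) := by
  simpa only [Set.pair_eq_pair_iff] using hf.2.2.2.2.2.2.2 u v h

theorem exists_not_htp_of_tgt_eq (hf : IsFoldAt f e₁ e₂) (hconn : G.Conn)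
    (ht : G.tgt e₁ = G.tgt e₂) (v₀ : G.V) :
    ∃ p p' : EWalk G v₀ v₀, Htp H (f.mapWalk p) (f.mapWalk p') ∧ ¬ Htp G p p' := by
  obtain ⟨w⟩ := hconn v₀ (G.src e₁)
  obtain ⟨w'⟩ := hconn (G.src e₁) v₀
  have hback : G.tgt (G.bar e₂) = G.src e₁ := (G.tgt_bar e₂).trans hf.src_eq.symm
  refine ⟨w.append (.cons e₁ rfl ht (.cons (G.bar e₂) rfl hback w')), w.append w', ?_,
    fun hp => ?_⟩
  · rw [f.mapWalk_append, f.mapWalk_append]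
    exact Htp.append_left _ (Htp.cons_cons_of_eq_bar (by rw [f.map_bar, hf.onE_eq]) _ _ _ _ _)
  · have h₀ : G.crossing e₁ e₂ = 0 := by simp [SerreGraph.crossing, hf.ne.symm, hf.ne_bar]
    have := hp.winding_eq e₁
    simp [EWalk.winding_append, EWalk.winding, G.crossing_self, G.crossing_bar, h₀] at this

theorem fiber_of_ne (hf : IsFoldAt f e₁ e₂) {u v : G.V} (h : f.onV u = f.onV v) (huv : u ≠ v) :
    u = G.tgt e₁ ∧ v = G.tgt e₂ ∨ u = G.tgt e₂ ∧ v = G.tgt e₁ :=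
  (hf.eq_or_of_onV_eq h).resolve_left huv

open Classical in
noncomputable def bridge (hf : IsFoldAt f e₁ e₂) (u v : G.V) (h : f.onV u = f.onV v) :
    EWalk G u v :=
  if huv : u = v then (EWalk.nil u).copy rfl huv
  else if hu : u = G.tgt e₁ then
    (EWalk.vee e₁ e₂ (G.tgt_bar e₁) hf.src_eq.symm).copy hu.symm
      ((hf.fiber_of_ne h huv).resolve_right fun h' => huv (hu.trans h'.2.symm)).2.symm
  else
    (EWalk.vee e₂ e₁ ((G.tgt_bar e₂).trans hf.src_eq.symm) rfl).copy
      ((hf.fiber_of_ne h huv).resolve_left fun h' => hu h'.1).1.symm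
      ((hf.fiber_of_ne h huv).resolve_left fun h' => hu h'.1).2.symm

theorem bridge_self (hf : IsFoldAt f e₁ e₂) (u : G.V) (h : f.onV u = f.onV u) :
    hf.bridge u u h = .nil u := by
  unfold bridge; rw [dif_pos rfl]; rfl

theorem bridge_tgt₁_tgt₂ (hf : IsFoldAt f e₁ e₂) (hne : G.tgt e₁ ≠ G.tgt e₂)
    (h : f.onV (G.tgt e₁) = f.onV (G.tgt e₂)) :
    hf.bridge (G.tgt e₁) (G.tgt e₂) h = EWalk.vee e₁ e₂ (G.tgt_bar e₁) hf.src_eq.symm := by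
  unfold bridge; rw [dif_neg hne, dif_pos rfl]; rfl

theorem bridge_tgt₂_tgt₁ (hf : IsFoldAt f e₁ e₂) (hne : G.tgt e₁ ≠ G.tgt e₂)
    (h : f.onV (G.tgt e₂) = f.onV (G.tgt e₁)) :
    hf.bridge (G.tgt e₂) (G.tgt e₁) h =
      EWalk.vee e₂ e₁ ((G.tgt_bar e₂).trans hf.src_eq.symm) rfl := by
  unfold bridge; rw [dif_neg hne.symm, dif_neg hne.symm]; rfl

theorem mapWalk_bridge_htp (hf : IsFoldAt f e₁ e₂) (u v : G.V) (h : f.onV u = f.onV v) :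
    Htp H (f.mapWalk (hf.bridge u v h)) ((EWalk.nil (f.onV v)).copy h.symm rfl) := by
  unfold bridge
  split_ifs with huv hu
  · subst huv; exact .refl _
  · obtain ⟨-, rfl⟩ := (hf.fiber_of_ne h huv).resolve_right fun h' => huv (hu.trans h'.2.symm)
    subst hu
    exact f.mapWalk_vee_htp _ _ hf.onE_eq
  · obtain ⟨rfl, rfl⟩ := (hf.fiber_of_ne h huv).resolve_left fun h' => hu h'.1
    exact f.mapWalk_vee_htp _ _ hf.onE_eq.symm

theorem bridge_append_bridge (hf : IsFoldAt f e₁ e₂) (hne : G.tgt e₁ ≠ G.tgt e₂) {u v w : G.V}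
    (h₁ : f.onV u = f.onV v) (h₂ : f.onV v = f.onV w) :
    Htp G ((hf.bridge u v h₁).append (hf.bridge v w h₂)) (hf.bridge u w (h₁.trans h₂)) := by
  by_cases huv : u = v
  · subst huv; rw [bridge_self]; exact .refl _
  by_cases hvw : v = w
  · subst hvw; rw [bridge_self, EWalk.append_nil]; exact .refl _
  rcases hf.fiber_of_ne h₁ huv with ⟨rfl, rfl⟩ | ⟨rfl, rfl⟩
  · obtain ⟨-, rfl⟩ := (hf.fiber_of_ne h₂ hvw).resolve_left fun h' => hne h'.1.symm
    rw [bridge_self, bridge_tgt₁_tgt₂ hf hne, bridge_tgt₂_tgt₁ hf hne]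
    exact Htp.vee_append_vee _ _ _ _
  · obtain ⟨-, rfl⟩ := (hf.fiber_of_ne h₂ hvw).resolve_right fun h' => hne h'.1
    rw [bridge_self, bridge_tgt₁_tgt₂ hf hne, bridge_tgt₂_tgt₁ hf hne]
    exact Htp.vee_append_vee _ _ _ _

theorem bridge_append_cons_htp (hf : IsFoldAt f e₁ e₂) (hne : G.tgt e₁ ≠ G.tgt e₂)
    {u u' v v' w : G.V} {a a' : G.E} (haa : f.onE a = f.onE a')
    (hs : G.src a = u) (ht : G.tgt a = v) (hs' : G.src a' = u') (ht' : G.tgt a' = v')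
    (hu : f.onV u = f.onV u') (hv : f.onV v = f.onV v') (r : EWalk G v' w) :
    Htp G ((hf.bridge u u' hu).append (.cons a' hs' ht' r))
      (.cons a hs ht ((hf.bridge v v' hv).append r)) := by
  rcases hf.eq_or_of_onE_eq haa with rfl | (⟨ha, ha'⟩ | ⟨ha, ha'⟩) | (⟨ha, ha'⟩ | ⟨ha, ha'⟩)
  · subst hs ht hs' ht'
    rw [bridge_self, bridge_self]; exact .refl _
  all_goals subst a a'
  · subst hs ht ht'
    obtain rfl : u' = G.src e₁ := hs'.symm.trans hf.src_eq.symm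
    rw [bridge_self, bridge_tgt₁_tgt₂ hf hne]
    exact .symm (.cancel _ _ _ _ _ _)
  · subst hs' ht ht'
    obtain rfl : u = G.src e₁ := hs.symm.trans hf.src_eq.symm
    rw [bridge_self, bridge_tgt₂_tgt₁ hf hne]
    exact .symm (.cancel _ _ _ _ _ _)
  · obtain rfl : u = G.tgt e₁ := hs.symm
    obtain rfl : u' = G.tgt e₂ := hs'.symm
    obtain rfl : v = G.src e₁ := ht.symm.trans (G.tgt_bar e₁)
    obtain rfl : v' = G.src e₁ := ht'.symm.trans ((G.tgt_bar e₂).trans hf.src_eq.symm)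
    rw [bridge_self, bridge_tgt₁_tgt₂ hf hne]
    exact .cons _ _ _ (.cancel _ _ _ _ _ _)
  · obtain rfl : u = G.tgt e₂ := hs.symm
    obtain rfl : u' = G.tgt e₁ := hs'.symm
    obtain rfl : v = G.src e₁ := ht.symm.trans ((G.tgt_bar e₂).trans hf.src_eq.symm)
    obtain rfl : v' = G.src e₁ := ht'.symm.trans (G.tgt_bar e₁)
    rw [bridge_self, bridge_tgt₂_tgt₁ hf hne]
    exact .cons _ _ _ (.cancel _ _ _ _ _ _)

noncomputable def lift (hf : IsFoldAt f e₁ e₂) :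
    ∀ {x y : H.V}, EWalk H x y → ∀ u v : G.V, f.onV u = x → f.onV v = y → EWalk G u v
  | _, _, .nil _, u, v, hu, hv => hf.bridge u v (hu.trans hv.symm)
  | _, _, .cons h hs ht q, u, v, hu, hv =>
      (hf.bridge u (G.src (Function.surjInv hf.surjective_onE h))
          (by rw [hu, f.map_src, Function.surjInv_eq hf.surjective_onE h, hs])).append
        (.cons (Function.surjInv hf.surjective_onE h) rfl rfl
          (hf.lift q _ v (by rw [f.map_tgt, Function.surjInv_eq hf.surjective_onE h, ht]) hv))

theorem mapWalk_lift_htp (hf : IsFoldAt f e₁ e₂) {x y : H.V} (q : EWalk H x y) :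
    ∀ (u v : G.V) (hu : f.onV u = x) (hv : f.onV v = y),
      Htp H (f.mapWalk (hf.lift q u v hu hv)) (q.copy hu.symm hv.symm) := by
  induction q with
  | nil x =>
      intro u v hu hv
      subst hv
      exact hf.mapWalk_bridge_htp u v _
  | cons h hs ht q ih =>
      intro u v hu hv
      subst hv
      refine .trans (.of_eq (f.mapWalk_append _ _)) (.trans (.append
        (hf.mapWalk_bridge_htp _ _ _) (.cons _ _ _ (ih _ _ _ rfl))) (.of_eq ?_))
      rw [EWalk.copy_nil_append, EWalk.cons_copy, EWalk.copy_cons, EWalk.copy_cons]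
      congr 1
      exact Function.surjInv_eq hf.surjective_onE h

theorem bridge_append_lift_htp (hf : IsFoldAt f e₁ e₂) (hne : G.tgt e₁ ≠ G.tgt e₂)
    {x y : H.V} (q : EWalk H x y) {u' u v : G.V} (h : f.onV u' = f.onV u)
    (hu : f.onV u = x) (hv : f.onV v = y) :
    Htp G ((hf.bridge u' u h).append (hf.lift q u v hu hv)) (hf.lift q u' v (h.trans hu) hv) := by
  cases q with
  | nil => exact hf.bridge_append_bridge hne _ _
  | cons =>
      rw [lift, lift, ← EWalk.append_assoc]
      exact .append_right (hf.bridge_append_bridge hne _ _) _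

theorem lift_cons_htp (hf : IsFoldAt f e₁ e₂) (hne : G.tgt e₁ ≠ G.tgt e₂) {x y z : H.V}
    {h : H.E} (hs : H.src h = x) (ht : H.tgt h = y) (q : EWalk H y z) {u v m n : G.V}
    {a : G.E} (ha : f.onE a = h) (ham : G.src a = m) (han : G.tgt a = n)
    (hu : f.onV u = x) (hv : f.onV v = z) :
    Htp G (hf.lift (.cons h hs ht q) u v hu hv)
      ((hf.bridge u m (by rw [hu, ← ham, f.map_src, ha, hs])).append
        (.cons a ham han (hf.lift q n v (by rw [← han, f.map_tgt, ha, ht]) hv))) := by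
  have ha₀ := Function.surjInv_eq hf.surjective_onE h
  have hum : f.onV u = f.onV m := by rw [hu, ← ham, f.map_src, ha, hs]
  have hm : f.onV m = f.onV (G.src (Function.surjInv hf.surjective_onE h)) := by
    rw [← ham, f.map_src, f.map_src, ha, ha₀]
  rw [lift]
  refine .trans (.append_right (hf.bridge_append_bridge hne hum hm).symm _) ?_
  rw [EWalk.append_assoc]
  refine .append_left _ (.trans (hf.bridge_append_cons_htp hne (ha.trans ha₀.symm) _ _ _ _ _
    (by rw [← han, f.map_tgt, f.map_tgt, ha, ha₀]) _) (.cons _ _ _ ?_))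
  exact hf.bridge_append_lift_htp hne _ _ _ _

theorem lift_htp (hf : IsFoldAt f e₁ e₂) (hne : G.tgt e₁ ≠ G.tgt e₂) {x y : H.V}
    {q q' : EWalk H x y} (hq : Htp H q q') :
    ∀ (u v : G.V) (hu : f.onV u = x) (hv : f.onV v = y),
      Htp G (hf.lift q u v hu hv) (hf.lift q' u v hu hv) := by
  induction hq with
  | refl q => exact fun _ _ _ _ => .refl _
  | symm _ ih => exact fun u v hu hv => (ih u v hu hv).symm
  | trans _ _ ih₁ ih₂ => exact fun u v hu hv => (ih₁ u v hu hv).trans (ih₂ u v hu hv)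
  | cons h hs ht _ ih => exact fun u v hu hv => .append_left _ (.cons _ _ _ (ih _ _ _ _))
  | cancel h hs ht hs' ht' p =>
      intro u v hu hv
      have ha := Function.surjInv_eq hf.surjective_onE h
      rw [lift]
      refine .trans (.append_left _ (.cons _ _ _ (hf.lift_cons_htp hne _ _ _
        (a := G.bar (Function.surjInv hf.surjective_onE h)) (m := G.tgt _)
        (by rw [f.map_bar, ha]) rfl (G.tgt_bar _) _ hv))) ?_
      rw [bridge_self]
      exact .trans (.append_left _ (.cancel _ _ _ _ _ _)) (hf.bridge_append_lift_htp hne _ _ _ _)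

theorem lift_mapWalk_htp (hf : IsFoldAt f e₁ e₂) (hne : G.tgt e₁ ≠ G.tgt e₂) {u v : G.V}
    (p : EWalk G u v) :
    ∀ (u' v' : G.V) (hu : f.onV u' = f.onV u) (hv : f.onV v' = f.onV v),
      Htp G (hf.lift (f.mapWalk p) u' v' hu hv)
        ((hf.bridge u' u hu).append (p.append (hf.bridge v v' hv.symm))) := by
  induction p with
  | nil v => exact fun u' v' hu hv => (hf.bridge_append_bridge hne _ _).symm
  | cons e hs ht p ih =>
      intro u' v' hu hv
      refine .trans (hf.lift_cons_htp hne _ _ _ rfl hs ht hu hv) (.append_left _ (.cons _ _ _ ?_))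
      refine .trans (ih _ _ rfl hv) ?_
      rw [bridge_self]
      exact .refl _

theorem exists_mapWalk_htp (hf : IsFoldAt f e₁ e₂) {u v : G.V}
    (q : EWalk H (f.onV u) (f.onV v)) : ∃ p : EWalk G u v, Htp H (f.mapWalk p) q :=
  ⟨hf.lift q u v rfl rfl, hf.mapWalk_lift_htp q u v rfl rfl⟩

theorem htp_of_mapWalk_htp (hf : IsFoldAt f e₁ e₂) (hne : G.tgt e₁ ≠ G.tgt e₂) {u v : G.V}
    {p p' : EWalk G u v} (h : Htp H (f.mapWalk p) (f.mapWalk p')) : Htp G p p' := by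
  have hp := hf.lift_mapWalk_htp hne p u v rfl rfl
  have hp' := hf.lift_mapWalk_htp hne p' u v rfl rfl
  rw [bridge_self, bridge_self, EWalk.append_nil] at hp hp'
  exact hp.symm.trans ((hf.lift_htp hne h u v rfl rfl).trans hp')

end IsFoldAt

theorem fold_is_homotopy_equivalence_iff_type1
    {G H : SerreGraph} (hconn : G.Conn) (f : GraphHom G H)
    (e₁ e₂ : G.E) (hfold : IsFoldAt f e₁ e₂) (v₀ : G.V) :
    (InducesPi1Bij f v₀ ↔ G.tgt e₁ ≠ G.tgt e₂) ∧
    (G.tgt e₁ = G.tgt e₂ →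
      ¬ ∀ p p' : EWalk G v₀ v₀,
          Htp H (f.mapWalk p) (f.mapWalk p') → Htp G p p') := by
  have type2 : G.tgt e₁ = G.tgt e₂ →
      ¬ ∀ p p' : EWalk G v₀ v₀, Htp H (f.mapWalk p) (f.mapWalk p') → Htp G p p' := by
    intro ht hinj
    obtain ⟨p, p', hmap, hp⟩ := hfold.exists_not_htp_of_tgt_eq hconn ht v₀
    exact hp (hinj p p' hmap)
  refine ⟨⟨fun hbij ht => type2 ht hbij.2, fun hne => ⟨?_, ?_⟩⟩, type2⟩
  · exact fun q => hfold.exists_mapWalk_htp q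
  · exact fun _ _ => hfold.htp_of_mapWalk_htp hne
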